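/- arXiv:1208.3324 — 2 statements merged into one kernel-verified Lean document; each statement's English description precedes it below -/
import Mathlib

section
/- Under the assumption that −m1⁴ − m2⁴ − m3⁴ + 2m1²m2² + 2m1²m3² + 2m2²m3² ≥ 0 (so that σ is real), the identity r23²·K1 + r13²·K2 + r12²·K3 = 2 S d holds, where d = (m1²K1 + m2²K2 + m3²K3)/(2σ); equivalently, σ (r23²·K1 + r13²·K2 + r12²·K3) = S (m1²K1 + m2²K2 + m3²K3). -/
/-!
With `a, b, c = r23², r13², r12²` and `μᵢ = mᵢ²`, write `H a b c = a(b+c-a) + b(a+c-b) + c(a+b-c)`.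
Then `r23²K1 + r13²K2 + r12²K3 = H(a,b,c) σ + B S` and `m1²K1 + m2²K2 + m3²K3 = B σ + H(μ) S` with the
same cross term `B`, so the identity reduces to `σ² H(a,b,c) = S² H(μ)`. Both sides equal `4σ²S²`:
`H(μ) = 4σ²` by definition of `σ`, and `H(a,b,c) = 4S²` is Heron's formula.
-/

section HeronForm

variable {R : Type*} [CommRing R]

def heronForm (a b c : R) : R := a * (b + c - a) + b * (a + c - b) + c * (a + b - c)

theorem heronForm_dist_sq (x1 y1 x2 y2 x3 y3 : R) :
    heronForm ((x2 - x3) ^ 2 + (y2 - y3) ^ 2) ((x1 - x3) ^ 2 + (y1 - y3) ^ 2)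
        ((x1 - x2) ^ 2 + (y1 - y2) ^ 2) =
      4 * (x1 * y2 + x2 * y3 + x3 * y1 - x1 * y3 - x3 * y2 - x2 * y1) ^ 2 := by
  unfold heronForm; ring

theorem sigma_mul_sum_eq_of_heronForm {a b c μ1 μ2 μ3 σ S K1 K2 K3 : R}
    (hH : σ ^ 2 * heronForm a b c = S ^ 2 * heronForm μ1 μ2 μ3)
    (hK1 : K1 = (c + b - a) * σ + (μ2 + μ3 - μ1) * S)
    (hK2 : K2 = (a + c - b) * σ + (μ1 + μ3 - μ2) * S)
    (hK3 : K3 = (b + a - c) * σ + (μ1 + μ2 - μ3) * S) :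
    σ * (a * K1 + b * K2 + c * K3) = S * (μ1 * K1 + μ2 * K2 + μ3 * K3) := by
  subst hK1 hK2 hK3
  unfold heronForm at hH
  linear_combination hH

end HeronForm

theorem identity_r23K1_sum_general
    (x1 y1 x2 y2 x3 y3 m1 m2 m3 : ℝ)
    (hrad : 0 ≤ -m1^4 - m2^4 - m3^4 + 2*m1^2*m2^2 + 2*m1^2*m3^2 + 2*m2^2*m3^2)
    (r12 r13 r23 S σ K1 K2 K3 : ℝ)
    (hr12 : r12 = Real.sqrt ((x1-x2)^2 + (y1-y2)^2))
    (hr13 : r13 = Real.sqrt ((x1-x3)^2 + (y1-y3)^2))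
    (hr23 : r23 = Real.sqrt ((x2-x3)^2 + (y2-y3)^2))
    (hS : S = |x1*y2 + x2*y3 + x3*y1 - x1*y3 - x3*y2 - x2*y1|)
    (hσ : σ = (1/2) * Real.sqrt
        (-m1^4 - m2^4 - m3^4 + 2*m1^2*m2^2 + 2*m1^2*m3^2 + 2*m2^2*m3^2))
    (hK1 : K1 = (r12^2 + r13^2 - r23^2)*σ + (m2^2 + m3^2 - m1^2)*S)
    (hK2 : K2 = (r23^2 + r12^2 - r13^2)*σ + (m1^2 + m3^2 - m2^2)*S)
    (hK3 : K3 = (r13^2 + r23^2 - r12^2)*σ + (m1^2 + m2^2 - m3^2)*S) :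
    σ*(r23^2*K1 + r13^2*K2 + r12^2*K3) = S*(m1^2*K1 + m2^2*K2 + m3^2*K3) := by
  have hdist : heronForm (r23 ^ 2) (r13 ^ 2) (r12 ^ 2) = 4 * S ^ 2 := by
    rw [hr12, hr13, hr23, hS, sq_abs, Real.sq_sqrt (by positivity), Real.sq_sqrt (by positivity),
      Real.sq_sqrt (by positivity), heronForm_dist_sq]
  have hmass : heronForm (m1 ^ 2) (m2 ^ 2) (m3 ^ 2) = 4 * σ ^ 2 := by
    rw [hσ, mul_pow, Real.sq_sqrt hrad]
    unfold heronForm; ring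
  refine sigma_mul_sum_eq_of_heronForm ?_ hK1 hK2 hK3
  rw [hdist, hmass]; ring

/-- The identity `r23²·K1 + r13²·K2 + r12²·K3 = 2Sd` where `d = (m1²K1+m2²K2+m3²K3)/(2σ)`;
equivalently `σ(r23²·K1 + r13²·K2 + r12²·K3) = S(m1²K1 + m2²K2 + m3²K3)`. -/
theorem identity_r23K1_sum
    (x1 y1 x2 y2 x3 y3 m1 m2 m3 : ℝ)
    (hm1 : 0 < m1) (hm2 : 0 < m2) (hm3 : 0 < m3)
    (hrad : 0 ≤ -m1^4 - m2^4 - m3^4 + 2*m1^2*m2^2 + 2*m1^2*m3^2 + 2*m2^2*m3^2)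
    (r12 r13 r23 S σ K1 K2 K3 : ℝ)
    (hr12 : r12 = Real.sqrt ((x1-x2)^2 + (y1-y2)^2))
    (hr13 : r13 = Real.sqrt ((x1-x3)^2 + (y1-y3)^2))
    (hr23 : r23 = Real.sqrt ((x2-x3)^2 + (y2-y3)^2))
    (hS : S = |x1*y2 + x2*y3 + x3*y1 - x1*y3 - x3*y2 - x2*y1|)
    (hσ : σ = (1/2) * Real.sqrt
        (-m1^4 - m2^4 - m3^4 + 2*m1^2*m2^2 + 2*m1^2*m3^2 + 2*m2^2*m3^2))
    (hK1 : K1 = (r12^2 + r13^2 - r23^2)*σ + (m2^2 + m3^2 - m1^2)*S)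
    (hK2 : K2 = (r23^2 + r12^2 - r13^2)*σ + (m1^2 + m3^2 - m2^2)*S)
    (hK3 : K3 = (r13^2 + r23^2 - r12^2)*σ + (m1^2 + m2^2 - m3^2)*S) :
    σ*(r23^2*K1 + r13^2*K2 + r12^2*K3) = S*(m1^2*K1 + m2^2*K2 + m3^2*K3) :=
  identity_r23K1_sum_general x1 y1 x2 y2 x3 y3 m1 m2 m3 hrad r12 r13 r23 S σ K1 K2 K3 hr12 hr13 hr23
    hS hσ hK1 hK2 hK3
end

section
/- Let P1, P2, P3, P4 be noncoplanar points in ℝ³ ordered so that V = det[[1,1,1,1],[x1,x2,x3,x4],[y1,y2,y3,y4],[z1,z2,z3,z4]] > 0, and let P* = (x*, y*, z*) be a point distinct from each P_j. For j = 1, …, 4 let V_j be the determinant obtained by replacing the j-th column of the above 4×4 matrix by the column (1, x*, y*, z*)ᵀ, and set m_j* = |P*P_j|·V_j. Then the function F(x,y,z) = Σ_{j=1}^4 m_j* √((x−x_j)² + (y−y_j)² + (z−z_j)²) has a stationary point at P*, i.e. Σ_{j=1}^4 m_j* (x* − x_j)/|P*P_j| = 0, Σ_{j=1}^4 m_j*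 (y* − y_j)/|P*P_j| = 0, and Σ_{j=1}^4 m_j* (z* − z_j)/|P*P_j| = 0. -/
/-!
By Cramer's rule the weights `V_j / V` are the barycentric coordinates of `P*` with respect to
`P₁, …, P₄`: `∑ V_j = V` and `∑ V_j P_j = V P*`, so `∑ V_j (P* - P_j) = 0`. Since
`m_j* / |P*P_j| = V_j`, this is exactly the stationarity condition.
-/

theorem Matrix.sum_cramer_mul_sub_eq_zero {n R : Type*} [Fintype n] [DecidableEq n] [CommRing R]
    (A : Matrix n n R) (b : n → R) {i₀ : n} (hA : ∀ j, A i₀ j = 1) (hb : b i₀ = 1) (i : n) :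
    ∑ j, A.cramer b j * (b i - A i j) = 0 := by
  have hrow : ∀ k, ∑ j, A k j * A.cramer b j = A.det * b k := fun k =>
    congrFun (A.mulVec_cramer b) k
  have hsum : ∑ j, A.cramer b j = A.det := by simpa [hA, hb] using hrow i₀
  calc ∑ j, A.cramer b j * (b i - A i j)
      = (∑ j, A.cramer b j) * b i - ∑ j, A i j * A.cramer b j := by
        simp only [mul_sub, Finset.sum_sub_distrib, Finset.sum_mul, mul_comm (A i _)]
    _ = 0 := by rw [hsum, hrow, sub_self]

lemma cramer_fin_four_affine (x1 y1 z1 x2 y2 z2 x3 y3 z3 x4 y4 z4 xs ys zs : ℝ) :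
    (!![(1:ℝ), 1, 1, 1; x1, x2, x3, x4; y1, y2, y3, y4; z1, z2, z3, z4]).cramer
        ![1, xs, ys, zs] =
      ![Matrix.det !![(1:ℝ), 1, 1, 1; xs, x2, x3, x4; ys, y2, y3, y4; zs, z2, z3, z4],
        Matrix.det !![(1:ℝ), 1, 1, 1; x1, xs, x3, x4; y1, ys, y3, y4; z1, zs, z3, z4],
        Matrix.det !![(1:ℝ), 1, 1, 1; x1, x2, xs, x4; y1, y2, ys, y4; z1, z2, zs, z4],
        Matrix.det !![(1:ℝ), 1, 1, 1; x1, x2, x3, xs; y1, y2, y3, ys; z1, z2, z3, zs]] := by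
  ext j
  fin_cases j <;> rw [Matrix.cramer_apply] <;> congr 1 <;> ext k l <;>
    fin_cases k <;> fin_cases l <;> rfl

lemma sum_det_mul_sub_eq_zero (x1 y1 z1 x2 y2 z2 x3 y3 z3 x4 y4 z4 xs ys zs : ℝ) (i : Fin 4) :
    let M := !![(1:ℝ), 1, 1, 1; x1, x2, x3, x4; y1, y2, y3, y4; z1, z2, z3, z4]
    let b := ![1, xs, ys, zs]
    Matrix.det !![(1:ℝ), 1, 1, 1; xs, x2, x3, x4; ys, y2, y3, y4; zs, z2, z3, z4] * (b i - M i 0)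
      + Matrix.det !![(1:ℝ), 1, 1, 1; x1, xs, x3, x4; y1, ys, y3, y4; z1, zs, z3, z4]
        * (b i - M i 1)
      + Matrix.det !![(1:ℝ), 1, 1, 1; x1, x2, xs, x4; y1, y2, ys, y4; z1, z2, zs, z4]
        * (b i - M i 2)
      + Matrix.det !![(1:ℝ), 1, 1, 1; x1, x2, x3, xs; y1, y2, y3, ys; z1, z2, z3, zs]
        * (b i - M i 3) = 0 := by
  intro M b
  have h := M.sum_cramer_mul_sub_eq_zero b (i₀ := 0) (fun j => by fin_cases j <;> rfl) rfl i
  rwa [Fin.sum_univ_four, cramer_fin_four_affine] at h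

lemma sqrt_dist_ne_zero {a b c d e f : ℝ} (h : (a, b, c) ≠ (d, e, f)) :
    √((a - d) ^ 2 + (b - e) ^ 2 + (c - f) ^ 2) ≠ 0 := by
  rw [Real.sqrt_ne_zero']
  contrapose! h
  simp only [Prod.mk.injEq]
  refine ⟨?_, ?_, ?_⟩ <;> nlinarith [sq_nonneg (a - d), sq_nonneg (b - e), sq_nonneg (c - f)]

theorem inverse_problem_stationary_3d_general
    (x1 y1 z1 x2 y2 z2 x3 y3 z3 x4 y4 z4 xs ys zs : ℝ)
    (hne1 : (xs, ys, zs) ≠ (x1, y1, z1))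
    (hne2 : (xs, ys, zs) ≠ (x2, y2, z2))
    (hne3 : (xs, ys, zs) ≠ (x3, y3, z3))
    (hne4 : (xs, ys, zs) ≠ (x4, y4, z4))
    (m1 m2 m3 m4 : ℝ)
    (hm1 : m1 = Real.sqrt ((xs-x1)^2 + (ys-y1)^2 + (zs-z1)^2)
        * Matrix.det !![(1:ℝ), 1, 1, 1; xs, x2, x3, x4;
            ys, y2, y3, y4; zs, z2, z3, z4])
    (hm2 : m2 = Real.sqrt ((xs-x2)^2 + (ys-y2)^2 + (zs-z2)^2)
        * Matrix.det !![(1:ℝ), 1, 1, 1; x1, xs, x3, x4;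
            y1, ys, y3, y4; z1, zs, z3, z4])
    (hm3 : m3 = Real.sqrt ((xs-x3)^2 + (ys-y3)^2 + (zs-z3)^2)
        * Matrix.det !![(1:ℝ), 1, 1, 1; x1, x2, xs, x4;
            y1, y2, ys, y4; z1, z2, zs, z4])
    (hm4 : m4 = Real.sqrt ((xs-x4)^2 + (ys-y4)^2 + (zs-z4)^2)
        * Matrix.det !![(1:ℝ), 1, 1, 1; x1, x2, x3, xs;
            y1, y2, y3, ys; z1, z2, z3, zs]) :
    (m1*(xs-x1)/Real.sqrt ((xs-x1)^2 + (ys-y1)^2 + (zs-z1)^2)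
      + m2*(xs-x2)/Real.sqrt ((xs-x2)^2 + (ys-y2)^2 + (zs-z2)^2)
      + m3*(xs-x3)/Real.sqrt ((xs-x3)^2 + (ys-y3)^2 + (zs-z3)^2)
      + m4*(xs-x4)/Real.sqrt ((xs-x4)^2 + (ys-y4)^2 + (zs-z4)^2) = 0) ∧
    (m1*(ys-y1)/Real.sqrt ((xs-x1)^2 + (ys-y1)^2 + (zs-z1)^2)
      + m2*(ys-y2)/Real.sqrt ((xs-x2)^2 + (ys-y2)^2 + (zs-z2)^2)
      + m3*(ys-y3)/Real.sqrt ((xs-x3)^2 + (ys-y3)^2 + (zs-z3)^2)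
      + m4*(ys-y4)/Real.sqrt ((xs-x4)^2 + (ys-y4)^2 + (zs-z4)^2) = 0) ∧
    (m1*(zs-z1)/Real.sqrt ((xs-x1)^2 + (ys-y1)^2 + (zs-z1)^2)
      + m2*(zs-z2)/Real.sqrt ((xs-x2)^2 + (ys-y2)^2 + (zs-z2)^2)
      + m3*(zs-z3)/Real.sqrt ((xs-x3)^2 + (ys-y3)^2 + (zs-z3)^2)
      + m4*(zs-z4)/Real.sqrt ((xs-x4)^2 + (ys-y4)^2 + (zs-z4)^2) = 0) := by
  subst hm1 hm2 hm3 hm4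
  simp only [mul_assoc, mul_div_cancel_left₀ _ (sqrt_dist_ne_zero hne1),
    mul_div_cancel_left₀ _ (sqrt_dist_ne_zero hne2), mul_div_cancel_left₀ _ (sqrt_dist_ne_zero hne3),
    mul_div_cancel_left₀ _ (sqrt_dist_ne_zero hne4)]
  exact ⟨sum_det_mul_sub_eq_zero x1 y1 z1 x2 y2 z2 x3 y3 z3 x4 y4 z4 xs ys zs 1,
    sum_det_mul_sub_eq_zero x1 y1 z1 x2 y2 z2 x3 y3 z3 x4 y4 z4 xs ys zs 2,
    sum_det_mul_sub_eq_zero x1 y1 z1 x2 y2 z2 x3 y3 z3 x4 y4 z4 xs ys zs 3⟩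

/-- 3D inverse Fermat–Torricelli problem: with the weights `m_j* = |P*P_j|·V_j`,
the function `F` has a stationary point at `P*`. -/
theorem inverse_problem_stationary_3d
    (x1 y1 z1 x2 y2 z2 x3 y3 z3 x4 y4 z4 xs ys zs : ℝ)
    (hV : 0 < Matrix.det !![(1:ℝ), 1, 1, 1; x1, x2, x3, x4;
        y1, y2, y3, y4; z1, z2, z3, z4])
    (hne1 : (xs, ys, zs) ≠ (x1, y1, z1))
    (hne2 : (xs, ys, zs) ≠ (x2, y2, z2))
    (hne3 : (xs, ys, zs) ≠ (x3, y3, z3))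
    (hne4 : (xs, ys, zs) ≠ (x4, y4, z4))
    (m1 m2 m3 m4 : ℝ)
    (hm1 : m1 = Real.sqrt ((xs-x1)^2 + (ys-y1)^2 + (zs-z1)^2)
        * Matrix.det !![(1:ℝ), 1, 1, 1; xs, x2, x3, x4;
            ys, y2, y3, y4; zs, z2, z3, z4])
    (hm2 : m2 = Real.sqrt ((xs-x2)^2 + (ys-y2)^2 + (zs-z2)^2)
        * Matrix.det !![(1:ℝ), 1, 1, 1; x1, xs, x3, x4;
            y1, ys, y3, y4; z1, zs, z3, z4])
    (hm3 : m3 = Real.sqrt ((xs-x3)^2 + (ys-y3)^2 + (zs-z3)^2)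
        * Matrix.det !![(1:ℝ), 1, 1, 1; x1, x2, xs, x4;
            y1, y2, ys, y4; z1, z2, zs, z4])
    (hm4 : m4 = Real.sqrt ((xs-x4)^2 + (ys-y4)^2 + (zs-z4)^2)
        * Matrix.det !![(1:ℝ), 1, 1, 1; x1, x2, x3, xs;
            y1, y2, y3, ys; z1, z2, z3, zs]) :
    (m1*(xs-x1)/Real.sqrt ((xs-x1)^2 + (ys-y1)^2 + (zs-z1)^2)
      + m2*(xs-x2)/Real.sqrt ((xs-x2)^2 + (ys-y2)^2 + (zs-z2)^2)
      + m3*(xs-x3)/Real.sqrt ((xs-x3)^2 + (ys-y3)^2 + (zs-z3)^2)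
      + m4*(xs-x4)/Real.sqrt ((xs-x4)^2 + (ys-y4)^2 + (zs-z4)^2) = 0) ∧
    (m1*(ys-y1)/Real.sqrt ((xs-x1)^2 + (ys-y1)^2 + (zs-z1)^2)
      + m2*(ys-y2)/Real.sqrt ((xs-x2)^2 + (ys-y2)^2 + (zs-z2)^2)
      + m3*(ys-y3)/Real.sqrt ((xs-x3)^2 + (ys-y3)^2 + (zs-z3)^2)
      + m4*(ys-y4)/Real.sqrt ((xs-x4)^2 + (ys-y4)^2 + (zs-z4)^2) = 0) ∧
    (m1*(zs-z1)/Real.sqrt ((xs-x1)^2 + (ys-y1)^2 + (zs-z1)^2)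
      + m2*(zs-z2)/Real.sqrt ((xs-x2)^2 + (ys-y2)^2 + (zs-z2)^2)
      + m3*(zs-z3)/Real.sqrt ((xs-x3)^2 + (ys-y3)^2 + (zs-z3)^2)
      + m4*(zs-z4)/Real.sqrt ((xs-x4)^2 + (ys-y4)^2 + (zs-z4)^2) = 0) :=
  inverse_problem_stationary_3d_general x1 y1 z1 x2 y2 z2 x3 y3 z3 x4 y4 z4 xs ys zs hne1 hne2 hne3
    hne4 m1 m2 m3 m4 hm1 hm2 hm3 hm4
end
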